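/- Let L₁,₂ be the 4-dimensional complex ω-Lie algebra with ordered basis (e,x,y,z) defined by the nonzero brackets [e,x] = z, [e,y] = −e, [x,y] = y, [y,z] = z and the bilinear form determined by ω(x,y) = 1 (all other values of ω on basis pairs are 0). A linear operator R on L₁,₂ is a compatible Rota-Baxter operator of weight 0 on L₁,₂ satisfying R ∘ R = 0 if and only if there exist a,b,c,d,r,s,t,u ∈ ℂ with ab + du + cr = 0, as + rt − cu = 0, dt + c² = 0, bt − cs = 0, bc + ds = 0, such that R(e) = a·z, R(x) = b·e + c·x + d·y + r·z, R(y) = s·e + t·x − c·y + u·z, and R(z) = 0. -/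
import Mathlib


/-- The bracket of the 4-dimensional complex ω-Lie algebra `L₁,₂`, with ordered basis
`(e, x, y, z) = (e₀, e₁, e₂, e₃)`, determined by the nonzero brackets
`[e,x] = z`, `[e,y] = −e`, `[x,y] = y`, `[y,z] = z`. -/
def L12bracket (u v : Fin 4 → ℂ) : Fin 4 → ℂ :=
  ![-(u 0 * v 2 - u 2 * v 0), 0, u 1 * v 2 - u 2 * v 1,
    (u 0 * v 1 - u 1 * v 0) + (u 2 * v 3 - u 3 * v 2)]

/-- The form `ω` of `L₁,₂`, determined by `ω(x,y) = 1` (all other basis values 0). -/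
def L12omega (u v : Fin 4 → ℂ) : ℂ := u 1 * v 2 - u 2 * v 1

lemma Rdecomp (R : (Fin 4 → ℂ) →ₗ[ℂ] (Fin 4 → ℂ)) (u : Fin 4 → ℂ) :
    R u = u 0 • R (Pi.single 0 1) + u 1 • R (Pi.single 1 1) + u 2 • R (Pi.single 2 1)
        + u 3 • R (Pi.single 3 1) := by
  have h : u = u 0 • (Pi.single 0 1 : Fin 4 → ℂ) + u 1 • (Pi.single 1 1 : Fin 4 → ℂ)
      + u 2 • (Pi.single 2 1 : Fin 4 → ℂ) + u 3 • (Pi.single 3 1 : Fin 4 → ℂ) := by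
    funext i; fin_cases i <;> simp
  conv_lhs => rw [h]
  simp

/-- A linear operator `R` on `L₁,₂` is a compatible Rota-Baxter operator
of weight 0 with `R ∘ R = 0` iff it has the explicit parametrized form `R₃`. -/
theorem compatible_square_zero_rotaBaxter_on_L12_iff
    (R : (Fin 4 → ℂ) →ₗ[ℂ] (Fin 4 → ℂ)) :
    ((∀ u v, L12bracket (R u) (R v) = R (L12bracket (R u) v + L12bracket u (R v))) ∧
      (∀ u v, L12omega (R u) v + L12omega u (R v) = 0) ∧
      (∀ u, R (R u) = 0)) ↔
    (∃ a b c d r s t w : ℂ,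
      a * b + d * w + c * r = 0 ∧ a * s + r * t - c * w = 0 ∧ d * t + c ^ 2 = 0 ∧
      b * t - c * s = 0 ∧ b * c + d * s = 0 ∧
      R (Pi.single 0 1) = ![0, 0, 0, a] ∧
      R (Pi.single 1 1) = ![b, c, d, r] ∧
      R (Pi.single 2 1) = ![s, t, -c, w] ∧
      R (Pi.single 3 1) = 0) := by
  constructor
  · rintro ⟨hRB, hω, hR2⟩
    -- ω-compatibility facts
    have hA1 : R (Pi.single 0 1) 1 = 0 := by
      have h := hω (Pi.single 0 1) (Pi.single 2 1); simp [L12omega] at h; linear_combination h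
    have hA2 : R (Pi.single 0 1) 2 = 0 := by
      have h := hω (Pi.single 0 1) (Pi.single 1 1); simp [L12omega] at h; linear_combination h
    have hD1 : R (Pi.single 3 1) 1 = 0 := by
      have h := hω (Pi.single 3 1) (Pi.single 2 1); simp [L12omega] at h; linear_combination h
    have hD2 : R (Pi.single 3 1) 2 = 0 := by
      have h := hω (Pi.single 3 1) (Pi.single 1 1); simp [L12omega] at h; linear_combination h
    have hC2 : R (Pi.single 2 1) 2 = -(R (Pi.single 1 1) 1) := by
      have h := hω (Pi.single 1 1) (Pi.single 2 1); simp [L12omega] at h; linear_combination h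
    -- R² = 0 component equations
    have hS0 := hR2 (Pi.single 0 1)
    rw [Rdecomp R (R (Pi.single 0 1))] at hS0
    have hS0_0 := congrFun hS0 0; simp at hS0_0
    have hS1 := hR2 (Pi.single 1 1)
    rw [Rdecomp R (R (Pi.single 1 1))] at hS1
    have hS1_0 := congrFun hS1 0; simp at hS1_0
    have hS1_1 := congrFun hS1 1; simp at hS1_1
    have hS1_3 := congrFun hS1 3; simp at hS1_3
    have hS2 := hR2 (Pi.single 2 1)
    rw [Rdecomp R (R (Pi.single 2 1))] at hS2
    have hS2_0 := congrFun hS2 0; simp at hS2_0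
    have hS2_3 := congrFun hS2 3; simp at hS2_3
    have hS3 := hR2 (Pi.single 3 1)
    rw [Rdecomp R (R (Pi.single 3 1))] at hS3
    have hS3_3 := congrFun hS3 3; simp at hS3_3
    -- Rota–Baxter equation at (x,z), component 0
    have hH := hRB (Pi.single 1 1) (Pi.single 3 1)
    rw [Rdecomp R (L12bracket (R (Pi.single 1 1)) (Pi.single 3 1)
        + L12bracket (Pi.single 1 1) (R (Pi.single 3 1)))] at hH
    have hH0 := congrFun hH 0; simp [L12bracket] at hH0
    -- deduce the vanishing entries
    have hD0 : R (Pi.single 3 1) 0 = 0 := by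
      have h : R (Pi.single 3 1) 0 * R (Pi.single 3 1) 0 = 0 := by
        linear_combination hH0 + (R (Pi.single 1 1) 0 + R (Pi.single 2 1) 0) * hD2
      exact mul_self_eq_zero.mp h
    have hA0 : R (Pi.single 0 1) 0 = 0 := by
      have h : R (Pi.single 0 1) 0 * R (Pi.single 0 1) 0 = 0 := by
        linear_combination hS0_0 - R (Pi.single 1 1) 0 * hA1 - R (Pi.single 2 1) 0 * hA2
          - R (Pi.single 0 1) 3 * hD0
      exact mul_self_eq_zero.mp h
    have hD3 : R (Pi.single 3 1) 3 = 0 := by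
      have h : R (Pi.single 3 1) 3 * R (Pi.single 3 1) 3 = 0 := by
        linear_combination hS3_3 - R (Pi.single 0 1) 3 * hD0 - R (Pi.single 1 1) 3 * hD1
          - R (Pi.single 2 1) 3 * hD2
      exact mul_self_eq_zero.mp h
    refine ⟨R (Pi.single 0 1) 3, R (Pi.single 1 1) 0, R (Pi.single 1 1) 1,
      R (Pi.single 1 1) 2, R (Pi.single 1 1) 3, R (Pi.single 2 1) 0,
      R (Pi.single 2 1) 1, R (Pi.single 2 1) 3, ?_, ?_, ?_, ?_, ?_, ?_, ?_, ?_, ?_⟩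
    · linear_combination hS1_3 - R (Pi.single 1 1) 3 * hD3
    · linear_combination hS2_3 - R (Pi.single 2 1) 3 * hD3 - R (Pi.single 2 1) 3 * hC2
    · linear_combination hS1_1 - R (Pi.single 1 1) 0 * hA1 - R (Pi.single 1 1) 3 * hD1
    · linear_combination hS2_0 - R (Pi.single 2 1) 0 * hA0 - R (Pi.single 2 1) 3 * hD0
        - R (Pi.single 2 1) 0 * hC2
    · linear_combination hS1_0 - R (Pi.single 1 1) 0 * hA0 - R (Pi.single 1 1) 3 * hD0
    · funext i; fin_cases i <;> simp [hA0, hA1, hA2]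
    · funext i; fin_cases i <;> simp
    · funext i; fin_cases i <;> simp [hC2]
    · funext i; fin_cases i <;> simp [hD0, hD1, hD2, hD3]
  · rintro ⟨a, b, c, d, r, s, t, w, h1, h2, h3, h4, h5, he, hx, hy, hz⟩
    have hRu : ∀ u : Fin 4 → ℂ,
        R u = ![b * u 1 + s * u 2, c * u 1 + t * u 2, d * u 1 - c * u 2,
          a * u 0 + r * u 1 + w * u 2] := by
      intro u
      rw [Rdecomp R u, he, hx, hy, hz]
      funext i; fin_cases i <;> simp <;> ring
    refine ⟨?_, ?_, ?_⟩
    · intro u v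
      rw [hRu u, hRu v, hRu]
      funext i; fin_cases i
      · simp [L12bracket]; linear_combination (u 1 * v 2 - u 2 * v 1) * h5
      · simp [L12bracket]; right; ring
      · simp [L12bracket]; linear_combination -(u 1 * v 2 - u 2 * v 1) * h3
      · simp [L12bracket]; linear_combination (u 1 * v 2 - u 2 * v 1) * (h1 + h4)
    · intro u v
      rw [hRu u, hRu v]
      simp [L12omega]; ring
    · intro u
      rw [hRu (R u), hRu u]
      funext i; fin_cases i
      · simp; linear_combination u 1 * h5 + u 2 * h4
      · simp; linear_combination u 1 * h3
      · simp; linear_combination u 2 * h3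
      · simp; linear_combination u 1 * h1 + u 2 * h2
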